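/- arXiv:1802.06473 — 2 statements merged into one kernel-verified Lean document; each statement's English description precedes it below -/
import Mathlib

section
/- Let rooted binary trees with leaves labeled by pairs (d, z) ∈ ℤ³ × ℤ³ be defined inductively: a tree is either a leaf carrying a label (d, z), or a node with two rooted binary subtrees. Define D(leaf(d, z)) = d and D(node(s, t)) = D(s) + D(t), and define the rotational momentum recursively by ρ(leaf(d, z)) = d × z and ρ(node(s, t)) = (ρ(s) × ρ(t)) × (D(s) + D(t)). Then for any four such rooted binary trees t₁, t₂, t₃, t₄ satisfying the balancing condition D(t₁) + D(t₂) + D(t₃) + D(t₄) = 0, one has det(ρ(t₁), ρ(t₂), ρ(node(t₃, t₄))) = det(ρ(t₃), ρ(t₄), ρ(node(t₁, t₂))). In particular, the mixed h-product of rotational momenta along a rational trivalent tropical curve, computed by choosing a 3-valent vertex as root, is unchanged (up to sign) when the root is moved across an internal edge to an adjacent 3-valent vertex. -/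
open Matrix

/-- Rooted binary trees with leaves labeled by pairs `(d, z) ∈ ℤ³ × ℤ³`. -/
inductive RootedBinaryTree : Type
  | leaf (d z : Fin 3 → ℤ) : RootedBinaryTree
  | node (s t : RootedBinaryTree) : RootedBinaryTree

/-- The total degree `D` of a tree: `D(leaf(d,z)) = d`, `D(node(s,t)) = D(s) + D(t)`. -/
def RootedBinaryTree.D : RootedBinaryTree → (Fin 3 → ℤ)
  | .leaf d _ => d
  | .node s t => s.D + t.D

/-- The rotational momentum: `ρ(leaf(d,z)) = d × z` and
`ρ(node(s,t)) = (ρ(s) × ρ(t)) × (D(s) + D(t))`. -/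
def RootedBinaryTree.rho : RootedBinaryTree → (Fin 3 → ℤ)
  | .leaf d z => d ⨯₃ z
  | .node s t => (s.rho ⨯₃ t.rho) ⨯₃ (s.D + t.D)

/-! Both sides are triple products of `u = ρ(t₁) × ρ(t₂)`, `v = ρ(t₃) × ρ(t₄)` and one of
`D(t₁) + D(t₂)`, `D(t₃) + D(t₄)`. Balancing makes these two degrees negatives of each other,
and the sign change is exactly compensated by the antisymmetry of `det(u, v, ·)` in `u, v`. -/

theorem dotProduct_cross_neg_eq_dotProduct_cross {R : Type*} [CommRing R] (u v w : Fin 3 → R) :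
    u ⬝ᵥ v ⨯₃ -w = v ⬝ᵥ u ⨯₃ w := by
  rw [map_neg, cross_anticomm, triple_product_permutation, triple_product_permutation]

theorem RootedBinaryTree.rho_node (s t : RootedBinaryTree) :
    (node s t).rho = (s.rho ⨯₃ t.rho) ⨯₃ (s.D + t.D) :=
  rfl

/-- For any four rooted binary trees `t₁ t₂ t₃ t₄` with
`D(t₁) + D(t₂) + D(t₃) + D(t₄) = 0`, one has
`det(ρ(t₁), ρ(t₂), ρ(node(t₃,t₄))) = det(ρ(t₃), ρ(t₄), ρ(node(t₁,t₂)))`: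
the mixed h-product is unchanged when the root is moved across an internal edge. -/
theorem mixed_h_product_root_invariant (t₁ t₂ t₃ t₄ : RootedBinaryTree)
    (hbal : t₁.D + t₂.D + t₃.D + t₄.D = 0) :
    (t₁.rho ⨯₃ t₂.rho) ⬝ᵥ (RootedBinaryTree.node t₃ t₄).rho =
      (t₃.rho ⨯₃ t₄.rho) ⬝ᵥ (RootedBinaryTree.node t₁ t₂).rho := by
  have hD : t₃.D + t₄.D = -(t₁.D + t₂.D) :=
    eq_neg_of_add_eq_zero_right (by rw [← hbal]; abel)
  rw [RootedBinaryTree.rho_node, RootedBinaryTree.rho_node, hD]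
  exact dotProduct_cross_neg_eq_dotProduct_cross _ _ _
end

section
/- Let v, w ∈ ℤ³ be linearly independent over ℝ. Let K = ℤv + ℤw be the subgroup of ℤ³ generated by v and w, and let H = {x ∈ ℤ³ : x lies in the real span of v and w} be the saturation of K in ℤ³. Then the index [H : K] is finite and equals the greatest common divisor of the three coordinates of v × w. (This lattice-index computation is the core of the inductive step computing the order of the torsion of H₁(L⁺(e)) for the graph 3-manifold pieces: the torsion contributed at a 3-valent vertex equals the GCD of the coordinates of the cross product of the incoming rotational momenta.) -/
/-!
The saturation `H` of `K = ℤv + ℤw` is the kernel of the functional `x ↦ (v × w) ⬝ᵥ x` on `ℤ³`,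
a free module of rank `2`. For a basis `e₀, e₁` of `H`, writing `v, w` in that basis gives
`[H : K] = |det|` and, by bilinearity, `v × w = det • (e₀ × e₁)`. So it suffices that `e₀ × e₁`
is primitive: if a prime `p` divided all its entries, then `e₀, e₁` would be dependent mod `p`,
i.e. `s e₀ + t e₁ = p z` with `p ∤ s` or `p ∤ t`; but `z ∈ H` because `H` is saturated, and
expanding `z` in the basis forces `p ∣ s` and `p ∣ t`.
-/

open Matrix Module

theorem RingHom.comp_cross {R S : Type*} [CommRing R] [CommRing S] (f : R →+* S)
    (u v : Fin 3 → R) : f ∘ (u ⨯₃ v) = (f ∘ u) ⨯₃ (f ∘ v) := by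
  ext i; fin_cases i <;> simp [cross_apply]

theorem smul_add_smul_cross_smul_add_smul {R : Type*} [CommRing R] (a b c d : R)
    (x y : Fin 3 → R) :
    (a • x + b • y) ⨯₃ (c • x + d • y) = (a * d - b * c) • (x ⨯₃ y) := by
  ext i; fin_cases i <;> simp [cross_apply] <;> ring

theorem Module.Basis.cross_eq_det_smul_cross {R : Type*} [CommRing R]
    {N : Submodule R (Fin 3 → R)} (b : Basis (Fin 2) R N) (u : Fin 2 → N) :
    (u 0 : Fin 3 → R) ⨯₃ u 1 = b.det u • ((b 0 : Fin 3 → R) ⨯₃ b 1) := by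
  have hu (i : Fin 2) : (u i : Fin 3 → R) = b.repr (u i) 0 • b 0 + b.repr (u i) 1 • b 1 := by
    conv_lhs => rw [← b.sum_repr (u i)]
    simp only [Fin.sum_univ_two, Submodule.coe_add, Submodule.coe_smul]
  rw [hu 0, hu 1, smul_add_smul_cross_smul_add_smul, Basis.det_apply, det_fin_two]
  simp only [Basis.toMatrix_apply, mul_comm]

theorem mem_span_pair_iff_dotProduct_cross_eq_zero {F : Type*} [Field F] {v w : Fin 3 → F}
    (hvw : LinearIndependent F ![v, w]) (x : Fin 3 → F) :
    x ∈ Submodule.span F {v, w} ↔ x ⬝ᵥ (v ⨯₃ w) = 0 := by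
  have hdet : LinearIndependent F ![x, v, w] ↔ x ⬝ᵥ (v ⨯₃ w) ≠ 0 := by
    rw [triple_product_eq_det, ← isUnit_iff_ne_zero]
    exact (linearIndependent_rows_iff_isUnit (A := of ![x, v, w])).trans (isUnit_iff_isUnit_det _)
  rw [← not_iff_not, ← Ne, ← hdet, ← range_cons_cons_empty]
  exact (linearIndependent_finCons.trans (and_iff_right hvw)).symm

theorem comap_intCast_span_pair_eq_ker_dotProduct_cross {F : Type*} [Field F] [CharZero F]
    {v w : Fin 3 → ℤ} (h : LinearIndependent F ![(fun i => (v i : F)), (fun i => (w i : F))]) :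
    AddSubgroup.comap ((Int.castAddHom F).compLeft (Fin 3))
        (Submodule.span F {(fun i => (v i : F)), (fun i => (w i : F))}).toAddSubgroup =
      (LinearMap.ker (dotProductEquiv ℤ (Fin 3) (v ⨯₃ w))).toAddSubgroup := by
  ext x
  rw [AddSubgroup.mem_comap, Submodule.mem_toAddSubgroup, Submodule.mem_toAddSubgroup,
    LinearMap.mem_ker, dotProductEquiv_apply_apply]
  refine (mem_span_pair_iff_dotProduct_cross_eq_zero h _).trans ?_
  change (Int.castRingHom F ∘ x) ⬝ᵥ ((Int.castRingHom F ∘ v) ⨯₃ (Int.castRingHom F ∘ w)) = 0 ↔ _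
  rw [← RingHom.comp_cross, ← RingHom.map_dotProduct, map_eq_zero_iff _ Int.cast_injective,
    dotProduct_comm]

theorem LinearIndependent.of_intCast {ι n F : Type*} [Field F] [CharZero F] {u : ι → n → ℤ}
    (h : LinearIndependent F fun i j => (u i j : F)) : LinearIndependent ℤ u :=
  .of_comp ((Int.castAddHom F).compLeft n).toIntLinearMap (h.restrict_scalars' ℤ)

theorem Module.Dual.finrank_ker_add_one_of_isDomain {R M : Type*} [CommRing R] [IsDomain R]
    [AddCommGroup M] [Module R M] [Module.Finite R M] {f : Module.Dual R M} (hf : f ≠ 0) :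
    finrank R (LinearMap.ker f) + 1 = finrank R M := by
  suffices finrank R (LinearMap.range f) = 1 by
    rw [← (LinearMap.ker f).finrank_quotient_add_finrank, add_comm, add_left_inj,
      f.quotKerEquivRange.finrank_eq, this]
  refine le_antisymm ((Submodule.finrank_le _).trans (finrank_self R).le) ?_
  rw [Submodule.one_le_finrank_iff, Ne, LinearMap.range_eq_bot]
  exact hf

theorem AddSubgroup.relIndex_closure_range_eq_natAbs_det {M ι : Type*} [AddCommGroup M]
    [Fintype ι] [DecidableEq ι] {u : ι → M} (hu : LinearIndependent ℤ u) {N : Submodule ℤ M}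
    (huN : ∀ i, u i ∈ N) (b : Basis ι ℤ N) :
    (closure (Set.range u)).relIndex N.toAddSubgroup = (b.det fun i => ⟨u i, huN i⟩).natAbs := by
  have hle : closure (Set.range u) ≤ N.toAddSubgroup :=
    (closure_le _).mpr (Set.range_subset_iff.mpr huN)
  rw [relIndex_eq_natAbs_det _ _ hle
    ((Basis.span hu).map (LinearEquiv.ofEq _ _ (toIntSubmodule_closure _).symm)) b]
  simp only [Basis.map_apply, Basis.span_apply, LinearEquiv.coe_ofEq_apply]
  rfl

def gcd3 (u : Fin 3 → ℤ) : ℕ := Int.gcd (u 0) (Int.gcd (u 1) (u 2))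

theorem dvd_gcd3_iff {k : ℤ} {u : Fin 3 → ℤ} : k ∣ gcd3 u ↔ ∀ i, k ∣ u i := by
  simp [gcd3, Int.dvd_coe_gcd_iff, Fin.forall_fin_succ]

theorem gcd3_ne_zero {u : Fin 3 → ℤ} (hu : u ≠ 0) : gcd3 u ≠ 0 := by
  contrapose! hu
  ext i
  simpa using dvd_gcd3_iff (k := 0).mp (by simp [hu]) i

theorem gcd3_smul (a : ℤ) (u : Fin 3 → ℤ) : gcd3 (a • u) = a.natAbs * gcd3 u := by
  simp only [gcd3, Int.gcd, Pi.smul_apply, smul_eq_mul, Int.natAbs_mul, Nat.gcd_mul_left,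
    Int.natAbs_natCast]

theorem exists_smul_add_smul_eq_prime_smul_of_dvd_cross {p : ℕ} [Fact p.Prime]
    {x y : Fin 3 → ℤ} (h : ∀ i, (p : ℤ) ∣ (x ⨯₃ y) i) :
    ∃ s t : ℤ, ∃ z : Fin 3 → ℤ, ¬((p : ℤ) ∣ s ∧ (p : ℤ) ∣ t) ∧ s • x + t • y = (p : ℤ) • z := by
  let π := Int.castRingHom (ZMod p)
  have hcross : (π ∘ x) ⨯₃ (π ∘ y) = 0 := by
    rw [← π.comp_cross]
    funext i
    exact (ZMod.intCast_zmod_eq_zero_iff_dvd _ p).mpr (h i)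
  have hdep : ¬ LinearIndependent (ZMod p) ![π ∘ x, π ∘ y] := fun hli =>
    crossProduct_ne_zero_iff_linearIndependent.mpr hli hcross
  simp only [LinearIndependent.pair_iff, not_forall] at hdep
  obtain ⟨s, t, hst, hne⟩ := hdep
  obtain ⟨s, rfl⟩ := ZMod.intCast_surjective s
  obtain ⟨t, rfl⟩ := ZMod.intCast_surjective t
  have hdvd (i : Fin 3) : (p : ℤ) ∣ s * x i + t * y i := by
    rw [← ZMod.intCast_zmod_eq_zero_iff_dvd]
    simpa [π] using congrFun hst i
  refine ⟨s, t, fun i => (s * x i + t * y i) / p, ?_, ?_⟩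
  · simpa only [ZMod.intCast_zmod_eq_zero_iff_dvd] using hne
  · funext i
    simp [Int.mul_ediv_cancel' (hdvd i)]

theorem gcd3_cross_basis_ker_eq_one (f : Module.Dual ℤ (Fin 3 → ℤ))
    (b : Basis (Fin 2) ℤ (LinearMap.ker f)) : gcd3 ((b 0 : Fin 3 → ℤ) ⨯₃ b 1) = 1 := by
  rw [Nat.eq_one_iff_not_exists_prime_dvd]
  intro p hp hdvd
  have := Fact.mk hp
  obtain ⟨s, t, z, hst, hz⟩ := exists_smul_add_smul_eq_prime_smul_of_dvd_cross
    (dvd_gcd3_iff.mp (Int.natCast_dvd_natCast.mpr hdvd))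
  have hzker : z ∈ LinearMap.ker f := by
    have hpz : (p : ℤ) * f z = 0 := by
      rw [← smul_eq_mul, ← map_smul, ← hz, map_add, map_smul, map_smul,
        LinearMap.mem_ker.mp (b 0).2, LinearMap.mem_ker.mp (b 1).2, smul_zero, smul_zero, add_zero]
    exact (mul_eq_zero.mp hpz).resolve_left (by exact_mod_cast hp.ne_zero)
  have hrepr := congrArg b.repr
    (show s • b 0 + t • b 1 = (p : ℤ) • ⟨z, hzker⟩ from Subtype.ext hz)
  simp only [map_add, map_smul, Basis.repr_self] at hrepr
  exact hst ⟨⟨_, by simpa using DFunLike.congr_fun hrepr 0⟩,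
    ⟨_, by simpa using DFunLike.congr_fun hrepr 1⟩⟩

/-- For `v, w ∈ ℤ³` linearly independent over `ℝ`, the index of the subgroup
`K = ℤv + ℤw` inside its saturation
`H = {x ∈ ℤ³ : x lies in the real span of v and w}` is finite and equal to the
gcd of the three coordinates of `v × w`. -/
theorem saturation_index_eq_gcd_cross (v w : Fin 3 → ℤ)
    (h : LinearIndependent ℝ ![(fun i => (v i : ℝ)), (fun i => (w i : ℝ))]) :
    0 < Int.gcd ((v ⨯₃ w) 0) (Int.gcd ((v ⨯₃ w) 1) ((v ⨯₃ w) 2)) ∧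
    (AddSubgroup.closure {v, w}).relIndex
        (AddSubgroup.comap ((Int.castAddHom ℝ).compLeft (Fin 3))
          (Submodule.span ℝ
            {(fun i => (v i : ℝ)), (fun i => (w i : ℝ))}).toAddSubgroup) =
      Int.gcd ((v ⨯₃ w) 0) (Int.gcd ((v ⨯₃ w) 1) ((v ⨯₃ w) 2)) := by
  let f := dotProductEquiv ℤ (Fin 3) (v ⨯₃ w)
  have hcross_ne : v ⨯₃ w ≠ 0 := by
    intro hc
    refine crossProduct_ne_zero_iff_linearIndependent.mpr h ?_
    change (Int.castRingHom ℝ ∘ v) ⨯₃ (Int.castRingHom ℝ ∘ w) = 0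
    rw [← RingHom.comp_cross, hc]
    ext; simp
  have hli : LinearIndependent ℤ ![v, w] := by
    have : ![(fun i => (v i : ℝ)), (fun i => (w i : ℝ))] = fun i j => (![v, w] i j : ℝ) := by
      ext i j; fin_cases i <;> rfl
    exact .of_intCast (this ▸ h)
  have hrank : finrank ℤ (LinearMap.ker f) = 2 := by
    have := Dual.finrank_ker_add_one_of_isDomain (f := f) (by simpa [f] using hcross_ne)
    rw [finrank_fin_fun] at this
    omega
  let b := finBasisOfFinrankEq ℤ (LinearMap.ker f) hrank
  have hmem (i : Fin 2) : ![v, w] i ∈ LinearMap.ker f := by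
    rw [LinearMap.mem_ker, dotProductEquiv_apply_apply, dotProduct_comm]
    fin_cases i
    exacts [dot_self_cross v w, dot_cross_self v w]
  change 0 < gcd3 (v ⨯₃ w) ∧ _ = gcd3 (v ⨯₃ w)
  refine ⟨Nat.pos_of_ne_zero (gcd3_ne_zero hcross_ne), ?_⟩
  rw [comap_intCast_span_pair_eq_ker_dotProduct_cross h, ← range_cons_cons_empty,
    AddSubgroup.relIndex_closure_range_eq_natAbs_det hli hmem b]
  have := b.cross_eq_det_smul_cross fun i => ⟨_, hmem i⟩
  simp only [cons_val_zero, cons_val_one] at this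
  rw [this, gcd3_smul, gcd3_cross_basis_ker_eq_one, mul_one]
end
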